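/- arXiv:1409.8056 — 2 statements merged into one kernel-verified Lean document; each statement's English description precedes it below -/
import Mathlib

section
/- Suppose p : G → A is a reflexive graph morphism to a graph with complementarity A, equipped with a choice, for all vertices x,y of G and a of A with (p x, p y) ⊨^A a, of a vertex [x,y]_a of G with p([x,y]_a) = a, such that for all edges e_x : x' → x, e_y : y' → y in G and e_a : a' → a in A with (p e_x, p e_y) ⊨^A e_a, there is an edge [e_x,e_y]_{e_a} : [x',y']_{a'} → [x,y]_a over e_a. Then (G, G^W, ⊨^G, ℓ^G), with ⊨^G defined by pulling back ⊨^A along p, is a graph with complementarity and p is a morphism of graphs with complementarity. -/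
/-- A reflexive graph: edges with source, target, and identity edges. -/
structure ReflGraph where
  V : Type
  E : Type
  src : E → V
  tgt : E → V
  eid : V → E
  src_eid : ∀ v, src (eid v) = v
  tgt_eid : ∀ v, tgt (eid v) = v

/-- A morphism of reflexive graphs. -/
structure GraphHom (G H : ReflGraph) where
  onV : G.V → H.V
  onE : G.E → H.E
  map_src : ∀ e, onV (G.src e) = H.src (onE e)
  map_tgt : ∀ e, onV (G.tgt e) = H.tgt (onE e)
  map_eid : ∀ v, onE (G.eid v) = H.eid (onV v)

/-- An edge `e : x' → x` is a transition *from* `x` (its target) *to* `x'` (its source).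
A graph fibration: every edge `e' : y → f x` in `H` lifts to an edge `e : x' → x` in `G`. -/
def IsFibration {G H : ReflGraph} (f : GraphHom G H) : Prop :=
  ∀ (x : G.V) (e' : H.E), H.tgt e' = f.onV x →
    ∃ e : G.E, G.tgt e = x ∧ f.onE e = e'

/-! `Σ` is the free reflexive graph on a single endo-edge `♥`; a morphism to `Σ`
amounts to a `Bool`-labelling of edges (`false` = silent/identity, `true` = `♥`)
sending identity edges to `false`. -/

/-- A complementarity structure on a reflexive graph `G`: a closed-world subgraph
`G^W` (given by `WV`/`WE`), a relation `⊨ : G² ⇸ G^W` (given by `cV`/`cE`, a subgraph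
of `G² × G^W`), and a labelling `ℓ : G^W → Σ` (given by `lab`, defined on all edges
but only meaningful on `G^W`), such that the composite relation `G² ⇸ G^W → Σ` is
partially functional and symmetric. -/
structure ComplStruct (G : ReflGraph) where
  WV : G.V → Prop
  WE : G.E → Prop
  W_src : ∀ e, WE e → WV (G.src e)
  W_tgt : ∀ e, WE e → WV (G.tgt e)
  W_eid : ∀ v, WV v → WE (G.eid v)
  cV : G.V → G.V → G.V → Prop
  cE : G.E → G.E → G.E → Prop
  cV_W : ∀ {x y z}, cV x y z → WV z
  cE_W : ∀ {e e' w}, cE e e' w → WE w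
  c_src : ∀ {e e' w}, cE e e' w → cV (G.src e) (G.src e') (G.src w)
  c_tgt : ∀ {e e' w}, cE e e' w → cV (G.tgt e) (G.tgt e') (G.tgt w)
  c_eid : ∀ {x y z}, cV x y z → cE (G.eid x) (G.eid y) (G.eid z)
  lab : G.E → Bool
  lab_eid : ∀ v, lab (G.eid v) = false
  pfun : ∀ {e e' w w'}, cE e e' w → cE e e' w' → lab w = lab w'
  symmV : ∀ {x y z}, cV x y z → ∃ z', cV y x z'
  symmE : ∀ {e e' w}, cE e e' w → ∃ w', cE e' e w' ∧ lab w' = lab w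

/-- A morphism of graphs with complementarity. -/
structure IsComplHom {G H : ReflGraph} (CG : ComplStruct G) (CH : ComplStruct H)
    (f : GraphHom G H) : Prop where
  wv : ∀ v, CG.WV v → CH.WV (f.onV v)
  we : ∀ e, CG.WE e → CH.WE (f.onE e)
  lab_eq : ∀ e, CG.WE e → CH.lab (f.onE e) = CG.lab e
  compV : ∀ x y z, CG.cV x y z → CH.cV (f.onV x) (f.onV y) (f.onV z)
  compE : ∀ e e' w, CG.cE e e' w → CH.cE (f.onE e) (f.onE e') (f.onE w)

/-! Every complement in `A` of an image pair `(p x, p y)` lifts along `p` (this is what the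
amalgamations `[x,y]_a` provide), so the composite `G² ⇸ G^W → Σ` of the pulled-back structure
is `ℓ^A ∘ ⊨^A ∘ p²`; partial functionality and symmetry are then inherited from `A`. -/

namespace ComplStruct

variable {A G : ReflGraph}

def comap (CA : ComplStruct A) (p : GraphHom G A)
    (liftV : ∀ {x y a}, CA.cV (p.onV x) (p.onV y) a → ∃ z, p.onV z = a)
    (liftE : ∀ {e e' w}, CA.cE (p.onE e) (p.onE e') w → ∃ w', p.onE w' = w) :
    ComplStruct G where
  WV v := CA.WV (p.onV v)
  WE e := CA.WE (p.onE e)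
  W_src e h := p.map_src e ▸ CA.W_src _ h
  W_tgt e h := p.map_tgt e ▸ CA.W_tgt _ h
  W_eid v h := (p.map_eid v).symm ▸ CA.W_eid _ h
  cV x y z := CA.cV (p.onV x) (p.onV y) (p.onV z)
  cE e e' w := CA.cE (p.onE e) (p.onE e') (p.onE w)
  cV_W := CA.cV_W
  cE_W := CA.cE_W
  c_src h := by simpa only [p.map_src] using CA.c_src h
  c_tgt h := by simpa only [p.map_tgt] using CA.c_tgt h
  c_eid h := by simpa only [p.map_eid] using CA.c_eid h
  lab e := CA.lab (p.onE e)
  lab_eid v := by simpa only [p.map_eid] using CA.lab_eid _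
  pfun := CA.pfun
  symmV h := by
    obtain ⟨a, ha⟩ := CA.symmV h
    obtain ⟨z, rfl⟩ := liftV ha
    exact ⟨z, ha⟩
  symmE h := by
    obtain ⟨a, ha, hlab⟩ := CA.symmE h
    obtain ⟨w, rfl⟩ := liftE ha
    exact ⟨w, ha, hlab⟩

theorem isComplHom_comap (CA : ComplStruct A) (p : GraphHom G A)
    (liftV : ∀ {x y a}, CA.cV (p.onV x) (p.onV y) a → ∃ z, p.onV z = a)
    (liftE : ∀ {e e' w}, CA.cE (p.onE e) (p.onE e') w → ∃ w', p.onE w' = w) :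
    IsComplHom (CA.comap p liftV liftE) CA p where
  wv _ h := h
  we _ h := h
  lab_eq _ _ := rfl
  compV _ _ _ h := h
  compE _ _ _ h := h

end ComplStruct

/-- if `p : G → A` is equipped with amalgamations `[x,y]_a` over every
`a` with `(p x, p y) ⊨^A a`, compatible with edges, then pulling back the whole
complementarity structure of `A` along `p` (taking `(x,y) ⊨^G z` iff
`(p x, p y) ⊨^A p z`) makes `G` a graph with complementarity, with `p` a morphism of
graphs with complementarity. -/
theorem stmt11 {A G : ReflGraph} (CA : ComplStruct A) (p : GraphHom G A)
    (amalg : ∀ (x y : G.V) (a : A.V), CA.cV (p.onV x) (p.onV y) a → G.V)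
    (amalg_over : ∀ x y a h, p.onV (amalg x y a h) = a)
    (amalgE : ∀ (ex ey : G.E) (ea : A.E) (h : CA.cE (p.onE ex) (p.onE ey) ea),
      ∃ w : G.E, p.onE w = ea ∧
        G.src w = amalg (G.src ex) (G.src ey) (A.src ea)
          (by rw [p.map_src, p.map_src]; exact CA.c_src h) ∧
        G.tgt w = amalg (G.tgt ex) (G.tgt ey) (A.tgt ea)
          (by rw [p.map_tgt, p.map_tgt]; exact CA.c_tgt h)) :
    ∃ C : ComplStruct G,
      C.WV = (fun v => CA.WV (p.onV v)) ∧
      C.WE = (fun e => CA.WE (p.onE e)) ∧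
      C.lab = (fun e => CA.lab (p.onE e)) ∧
      C.cV = (fun x y z => CA.cV (p.onV x) (p.onV y) (p.onV z)) ∧
      C.cE = (fun e e' w => CA.cE (p.onE e) (p.onE e') (p.onE w)) ∧
      IsComplHom C CA p := by
  exact ⟨CA.comap p (fun h => ⟨_, amalg_over _ _ _ h⟩)
    (fun h => (amalgE _ _ _ h).imp fun _ hw => hw.1), rfl, rfl, rfl, rfl, rfl,
    CA.isComplHom_comap p _ _⟩
end

section
/- In a modular graph with complementarity G, for any coherent pair x ⌢ y, the amalgamation [x,y] satisfies the fair-testing success predicate ⊥^G if and only if the pair (x,y) satisfies the success predicate in G^coh: [x,y] ∈ ⊥^{G^W} iff (x,y) ∈ ⊥^{G^coh}. -/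
variable {G : ReflGraph}

/-- The closed-world subgraph `G^W`. -/
def wGraph (G : ReflGraph) (C : ComplStruct G) : ReflGraph where
  V := {v : G.V // C.WV v}
  E := {e : G.E // C.WE e}
  src e := ⟨G.src e.val, C.W_src _ e.property⟩
  tgt e := ⟨G.tgt e.val, C.W_tgt _ e.property⟩
  eid v := ⟨G.eid v.val, C.W_eid _ v.property⟩
  src_eid v := Subtype.ext (by show G.src (G.eid v.val) = v.val; rw [G.src_eid])
  tgt_eid v := Subtype.ext (by show G.tgt (G.eid v.val) = v.val; rw [G.tgt_eid])

/-- The labelling of `G^W` over `Σ`. -/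
def wLab (G : ReflGraph) (C : ComplStruct G) : (wGraph G C).E → Bool :=
  fun e => C.lab e.val

/-- The coherence graph `G^coh`: the domain of the relation `⊨^G`. -/
def cohGraph (G : ReflGraph) (C : ComplStruct G) : ReflGraph where
  V := {q : G.V × G.V // ∃ z, C.cV q.1 q.2 z}
  E := {q : G.E × G.E // ∃ w, C.cE q.1 q.2 w}
  src e := ⟨(G.src e.val.1, G.src e.val.2),
    match e.property with | ⟨w, hw⟩ => ⟨G.src w, C.c_src hw⟩⟩
  tgt e := ⟨(G.tgt e.val.1, G.tgt e.val.2),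
    match e.property with | ⟨w, hw⟩ => ⟨G.tgt w, C.c_tgt hw⟩⟩
  eid v := ⟨(G.eid v.val.1, G.eid v.val.2),
    match v.property with | ⟨z, hz⟩ => ⟨G.eid z, C.c_eid hz⟩⟩
  src_eid v := Subtype.ext (by
    show (G.src (G.eid v.val.1), G.src (G.eid v.val.2)) = v.val
    rw [G.src_eid, G.src_eid])
  tgt_eid v := Subtype.ext (by
    show (G.tgt (G.eid v.val.1), G.tgt (G.eid v.val.2)) = v.val
    rw [G.tgt_eid, G.tgt_eid])

/-- The labelling `(x, y) ↦ x ⇓ y` of `G^coh` over `Σ` (well-defined on closed-world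
witnesses by partial functionality; realised here by a choice of witness). -/
noncomputable def cohLab (G : ReflGraph) (C : ComplStruct G) :
    (cohGraph G C).E → Bool :=
  fun e => C.lab (Classical.choose e.property)

/-- The relation `⊨^G`, viewed as a graph (a subgraph of `G² × G^W`). -/
def complGraph (G : ReflGraph) (C : ComplStruct G) : ReflGraph where
  V := {t : (G.V × G.V) × G.V // C.cV t.1.1 t.1.2 t.2}
  E := {t : (G.E × G.E) × G.E // C.cE t.1.1 t.1.2 t.2}
  src e := ⟨((G.src e.val.1.1, G.src e.val.1.2), G.src e.val.2), C.c_src e.property⟩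
  tgt e := ⟨((G.tgt e.val.1.1, G.tgt e.val.1.2), G.tgt e.val.2), C.c_tgt e.property⟩
  eid v := ⟨((G.eid v.val.1.1, G.eid v.val.1.2), G.eid v.val.2), C.c_eid v.property⟩
  src_eid v := Subtype.ext (by
    show ((G.src (G.eid v.val.1.1), G.src (G.eid v.val.1.2)), G.src (G.eid v.val.2)) = v.val
    rw [G.src_eid, G.src_eid, G.src_eid])
  tgt_eid v := Subtype.ext (by
    show ((G.tgt (G.eid v.val.1.1), G.tgt (G.eid v.val.1.2)), G.tgt (G.eid v.val.2)) = v.val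
    rw [G.tgt_eid, G.tgt_eid, G.tgt_eid])

/-- Projection of the relation `⊨^G` onto `G^coh`. -/
def complProj1 (G : ReflGraph) (C : ComplStruct G) :
    GraphHom (complGraph G C) (cohGraph G C) where
  onV v := ⟨v.val.1, ⟨v.val.2, v.property⟩⟩
  onE e := ⟨e.val.1, ⟨e.val.2, e.property⟩⟩
  map_src _ := Subtype.ext rfl
  map_tgt _ := Subtype.ext rfl
  map_eid _ := Subtype.ext rfl

/-- Projection of the relation `⊨^G` onto `G^W`. -/
def complProj2 (G : ReflGraph) (C : ComplStruct G) :
    GraphHom (complGraph G C) (wGraph G C) where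
  onV v := ⟨v.val.2, C.cV_W v.property⟩
  onE e := ⟨e.val.2, C.cE_W e.property⟩
  map_src _ := Subtype.ext rfl
  map_tgt _ := Subtype.ext rfl
  map_eid _ := Subtype.ext rfl

/-- `G` is modular: (1) every closed-world edge `e : z' → z` under `(x,y) ⊨ z` lifts
to a coherent pair of edges, and (2) every coherent pair of edges into `(x,y)` is
complementary to some edge into `z`. -/
def Modular (G : ReflGraph) (C : ComplStruct G) : Prop :=
  (∀ x y z, C.cV x y z → ∀ e, C.WE e → G.tgt e = z →
    ∃ ex ey, G.tgt ex = x ∧ G.tgt ey = y ∧ C.cE ex ey e) ∧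
  (∀ x y z, C.cV x y z → ∀ ex ey, G.tgt ex = x → G.tgt ey = y →
    (∃ w, C.cE ex ey w) → ∃ e, G.tgt e = z ∧ C.cE ex ey e)

/-- Silent reachability in a `Bool`-labelled graph: `SilReach x x'` means there is a
sequence of silent (label `false`) transitions from `x` down to `x'`
(an edge `e` is a transition from `tgt e` to `src e`). -/
inductive SilReach (G : ReflGraph) (lab : G.E → Bool) : G.V → G.V → Prop where
  | refl (x : G.V) : SilReach G lab x x
  | step (e : G.E) {y : G.V} : lab e = false → SilReach G lab (G.src e) y →
      SilReach G lab (G.tgt e) y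

/-- The fair-testing success predicate `⊥`: from every silently reachable state one
can silently reach a state from which a `♥`-labelled transition is available. -/
def FairBot (G : ReflGraph) (lab : G.E → Bool) (x : G.V) : Prop :=
  ∀ x', SilReach G lab x x' →
    ∃ e : G.E, SilReach G lab x' (G.tgt e) ∧ lab e = true

/-!
Modularity says precisely that `⊨^G`, read as a relation from `G^coh` to `G^W`, is a strong
bisimulation over `Σ`: clause (2) answers each move of a coherent pair by a move of its
amalgamation, clause (1) the converse, and partial functionality makes the labels agree.
The predicate `⊥` only mentions silent reachability and `♥`-moves, so it is invariant under
strong bisimulation.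
-/

def IsSimulation {H K : ReflGraph} (labH : H.E → Bool) (labK : K.E → Bool)
    (R : H.V → K.V → Prop) : Prop :=
  ∀ a b, R a b → ∀ e : H.E, H.tgt e = a →
    ∃ e' : K.E, K.tgt e' = b ∧ labK e' = labH e ∧ R (H.src e) (K.src e')

/-- A strong bisimulation over `Σ`. -/
def IsBisimulation {H K : ReflGraph} (labH : H.E → Bool) (labK : K.E → Bool)
    (R : H.V → K.V → Prop) : Prop :=
  IsSimulation labH labK R ∧ IsSimulation labK labH (flip R)

section Bisimulation

variable {H K : ReflGraph} {labH : H.E → Bool} {labK : K.E → Bool} {R : H.V → K.V → Prop}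

theorem IsBisimulation.symm (hR : IsBisimulation labH labK R) :
    IsBisimulation labK labH (flip R) :=
  ⟨hR.2, hR.1⟩

theorem SilReach.exists_of_isSimulation (hR : IsSimulation labH labK R) {a a' : H.V}
    (hr : SilReach H labH a a') : ∀ {b}, R a b → ∃ b', SilReach K labK b b' ∧ R a' b' := by
  induction hr with
  | refl a => exact fun hab => ⟨_, .refl _, hab⟩
  | step e he _ ih =>
    intro b hab
    obtain ⟨e', rfl, hlab, hsrc⟩ := hR _ _ hab e rfl
    obtain ⟨b', hr', hb'⟩ := ih hsrc
    exact ⟨b', .step e' (hlab.trans he) hr', hb'⟩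

theorem FairBot.of_isBisimulation (hR : IsBisimulation labH labK R) {a : H.V} {b : K.V}
    (hab : R a b) (ha : FairBot H labH a) : FairBot K labK b := by
  intro b' hbb'
  obtain ⟨a', haa', ha'b'⟩ := hbb'.exists_of_isSimulation hR.2 hab
  obtain ⟨e, hae, he⟩ := ha a' haa'
  obtain ⟨b'', hbb'', heb''⟩ := hae.exists_of_isSimulation hR.1 ha'b'
  obtain ⟨e', rfl, hlab, -⟩ := hR.1 _ _ heb'' e rfl
  exact ⟨e', hbb'', hlab.trans he⟩

theorem fairBot_iff_of_isBisimulation (hR : IsBisimulation labH labK R) {a : H.V} {b : K.V}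
    (hab : R a b) : FairBot H labH a ↔ FairBot K labK b :=
  ⟨.of_isBisimulation hR hab, .of_isBisimulation hR.symm hab⟩

end Bisimulation

section Modular

variable (C : ComplStruct G)

theorem cohLab_eq_of_cE {E : (cohGraph G C).E} {w : G.E} (hw : C.cE E.val.1 E.val.2 w) :
    cohLab G C E = C.lab w :=
  C.pfun (Classical.choose_spec E.property) hw

/-- The relation `⊨^G` between `G^coh` and `G^W`. -/
def complRel (q : (cohGraph G C).V) (c : (wGraph G C).V) : Prop :=
  C.cV q.val.1 q.val.2 c.val

theorem Modular.isBisimulation_complRel (hmod : Modular G C) :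
    IsBisimulation (cohLab G C) (wLab G C) (complRel C) := by
  constructor
  · rintro q c hqc E rfl
    obtain ⟨e, he, hcE⟩ := hmod.2 _ _ _ hqc E.val.1 E.val.2 rfl rfl E.property
    exact ⟨⟨e, C.cE_W hcE⟩, Subtype.ext he, (cohLab_eq_of_cE C hcE).symm, C.c_src hcE⟩
  · rintro c q hqc e rfl
    obtain ⟨ex, ey, hx, hy, hcE⟩ := hmod.1 _ _ _ hqc e.val e.property rfl
    exact ⟨⟨(ex, ey), e.val, hcE⟩, Subtype.ext (Prod.ext hx hy), cohLab_eq_of_cE C hcE,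
      C.c_src hcE⟩

end Modular

/-- in a modular graph with complementarity `G`, for any coherent pair
`x ⌢ y` with amalgamation `z` (i.e. `(x,y) ⊨^G z`), the amalgamation satisfies the
fair-testing success predicate in `G^W` iff the pair satisfies it in `G^coh`. -/
theorem stmt14 (G : ReflGraph) (C : ComplStruct G) (hmod : Modular G C)
    (x y z : G.V) (h : C.cV x y z) :
    FairBot (wGraph G C) (wLab G C) (⟨z, C.cV_W h⟩ : (wGraph G C).V) ↔
    FairBot (cohGraph G C) (cohLab G C)
      (⟨(x, y), ⟨z, h⟩⟩ : (cohGraph G C).V) :=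
  (fairBot_iff_of_isBisimulation hmod.isBisimulation_complRel
    (a := ⟨(x, y), z, h⟩) (b := ⟨z, C.cV_W h⟩) h).symm
end
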